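/- arXiv:0905.2605 — 5 statements merged into one kernel-verified Lean document; each statement's English description precedes it below -/
import Mathlib

section
/- Let A, B be nonempty sets in R^d forming an s-well-separated pair with s > 1, and suppose p, q with p ∈ A and q ∈ B realize the closest pair of the whole point set P ⊇ A ∪ B (i.e., |pq| ≤ |xy| for all distinct x, y ∈ P). Then A = {p} and B = {q}. -/
/-- If nonempty sets `A, B` form an `s`-well-separated pair with `s > 1`, and
`p ∈ A`, `q ∈ B` realize the closest pair of a finite point set `P ⊇ A ∪ B`, then
`A = {p}` and `B = {q}`. -/
theorem stmt2 {d : ℕ} (P A B : Set (EuclideanSpace ℝ (Fin d))) (hPfin : P.Finite)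
    (hA : A.Nonempty) (hB : B.Nonempty) (hAP : A ⊆ P) (hBP : B ⊆ P)
    (s : ℝ) (hs : 1 < s)
    (hsep : ∀ a ∈ A, ∀ b ∈ B, s * max (Metric.diam A) (Metric.diam B) ≤ dist a b)
    (p q : EuclideanSpace ℝ (Fin d)) (hp : p ∈ A) (hq : q ∈ B)
    (hclosest : ∀ x ∈ P, ∀ y ∈ P, x ≠ y → dist p q ≤ dist x y) :
    A = {p} ∧ B = {q} := by
  have hAb : Bornology.IsBounded A := (hPfin.subset hAP).isBounded
  have hBb : Bornology.IsBounded B := (hPfin.subset hBP).isBounded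
  set M := max (Metric.diam A) (Metric.diam B) with hM
  have hApos : ∀ x ∈ A, ∀ y ∈ A, x ≠ y → False := by
    intro x hx y hy hxy
    have h1 : dist p q ≤ dist x y := hclosest x (hAP hx) y (hAP hy) hxy
    have h2 : dist x y ≤ Metric.diam A := Metric.dist_le_diam_of_mem hAb hx hy
    have h3 : Metric.diam A ≤ M := le_max_left _ _
    have h4 : 0 < dist x y := dist_pos.mpr hxy
    have hsM : s * M ≤ dist p q := hsep p hp q hq
    nlinarith
  have hBpos : ∀ x ∈ B, ∀ y ∈ B, x ≠ y → False := by
    intro x hx y hy hxy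
    have h1 : dist p q ≤ dist x y := hclosest x (hBP hx) y (hBP hy) hxy
    have h2 : dist x y ≤ Metric.diam B := Metric.dist_le_diam_of_mem hBb hx hy
    have h3 : Metric.diam B ≤ M := le_max_right _ _
    have h4 : 0 < dist x y := dist_pos.mpr hxy
    have hsM : s * M ≤ dist p q := hsep p hp q hq
    nlinarith
  constructor
  · ext x
    simp only [Set.mem_singleton_iff]
    constructor
    · intro hx; by_contra h; exact hApos x hx p hp h
    · intro h; subst h; exact hp
  · ext x
    simp only [Set.mem_singleton_iff]
    constructor
    · intro hx; by_contra h; exact hBpos x hx q hq h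
    · intro h; subst h; exact hq
end

section
/- Let G be a graph on a finite point set P in R^d with positive edge weights equal to Euclidean lengths, and suppose that for every pair p, q ∈ P there exist p', q' ∈ P with p'q' an edge of G, |pp'| ≤ |p'q'|/(2s+2), and |qq'| ≤ |p'q'|/(2s+2), where s > 1. Then G is connected and for every p, q ∈ P the shortest-path distance π(p,q) in G satisfies π(p,q) ≤ ((s+1)/(s−1)) · |pq|. -/
/-- The Euclidean length of a polygonal path given by its list of vertices. -/
noncomputable def pathLength {X : Type*} [PseudoMetricSpace X] : List X → ℝ
  | [] => 0
  | [_] => 0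
  | a :: b :: t => dist a b + pathLength (b :: t)

lemma pathLength_append {X : Type*} [PseudoMetricSpace X] :
    ∀ (l1 : List X) (a b : X) (l2 : List X),
    pathLength (l1 ++ a :: b :: l2) = pathLength (l1 ++ [a]) + dist a b + pathLength (b :: l2)
  | [], a, b, l2 => by simp [pathLength]
  | [x], a, b, l2 => by simp [pathLength]; ring
  | x :: y :: t, a, b, l2 => by
    have ih := pathLength_append (y :: t) a b l2
    simp only [List.cons_append, List.append_eq, pathLength] at ih ⊢
    linarith [ih]

lemma head?_append_cons {X : Type*} (l : List X) (a : X) (rest : List X) :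
    (l ++ a :: rest).head? = (l ++ [a]).head? := by cases l <;> simp

/-- Let `G` (edge set `E`) be a geometric graph on a finite point set `P ⊆ ℝ^d`
such that every pair `p, q ∈ P` is covered by an edge `(p', q') ∈ E` with
`dist p p' ≤ dist p' q' / (2s+2)` and `dist q q' ≤ dist p' q' / (2s+2)`, where `s > 1`.
Then `G` is connected: between any `p, q ∈ P` there is a path along edges of `E` whose
total Euclidean length is at most `((s+1)/(s-1)) * dist p q`. -/
theorem stmt4 {d : ℕ} (P : Set (EuclideanSpace ℝ (Fin d))) (hP : P.Finite)
    (E : Set (EuclideanSpace ℝ (Fin d) × EuclideanSpace ℝ (Fin d)))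
    (hEP : ∀ e ∈ E, e.1 ∈ P ∧ e.2 ∈ P)
    (hEsymm : ∀ e ∈ E, (e.2, e.1) ∈ E)
    (s : ℝ) (hs : 1 < s)
    (hcover : ∀ p ∈ P, ∀ q ∈ P, ∃ p' q', (p', q') ∈ E ∧
      dist p p' ≤ dist p' q' / (2 * s + 2) ∧ dist q q' ≤ dist p' q' / (2 * s + 2)) :
    ∀ p ∈ P, ∀ q ∈ P, ∃ l : List (EuclideanSpace ℝ (Fin d)),
      l.head? = some p ∧ l.getLast? = some q ∧
      l.Chain' (fun a b => (a, b) ∈ E) ∧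
      pathLength l ≤ (s + 1) / (s - 1) * dist p q := by
  classical
  have hs1 : (0:ℝ) < s - 1 := by linarith
  have hs2 : (0:ℝ) < 2 * s + 2 := by linarith
  set k : ℝ := (s + 1) / (s - 1) with hkdef
  have hk : k * (s - 1) = s + 1 := div_mul_cancel₀ _ hs1.ne'
  have hk0 : 0 ≤ k := by positivity
  clear_value k
  set F := hP.toFinset with hF
  have key : ∀ n : ℕ, ∀ p ∈ P, ∀ q ∈ P,
      ((F ×ˢ F).filter (fun e => dist e.1 e.2 < dist p q)).card ≤ n →
      ∃ l : List (EuclideanSpace ℝ (Fin d)),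
        l.head? = some p ∧ l.getLast? = some q ∧
        l.Chain' (fun a b => (a, b) ∈ E) ∧
        pathLength l ≤ k * dist p q := by
    intro n
    induction n using Nat.strong_induction_on with
    | _ n ih =>
      intro p hp q hq hcard
      by_cases hpq : p = q
      · subst hpq
        exact ⟨[p], rfl, rfl, List.isChain_singleton _, by simp [pathLength]⟩
      have hD : 0 < dist p q := dist_pos.mpr hpq
      obtain ⟨p', q', hE, h1, h2⟩ := hcover p hp q hq
      obtain ⟨hp', hq'⟩ := hEP _ hE
      set r : ℝ := dist p' q' / (2 * s + 2) with hr
      have hrE : (2 * s + 2) * r = dist p' q' := by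
        rw [hr]; field_simp
      clear_value r
      have hr0 : (0:ℝ) ≤ r := le_trans dist_nonneg h1
      have htri : dist p' q' ≤ r + dist p q + r := by
        have t4 : dist p' q' ≤ dist p' p + dist p q + dist q q' := dist_triangle4 p' p q q'
        have : dist p' p ≤ r := by rw [dist_comm]; exact h1
        linarith [h2]
      have hE0 : dist p' q' * s ≤ dist p q * (s + 1) := by
        have h := mul_le_mul_of_nonneg_left htri (by linarith : (0:ℝ) ≤ s + 1)
        nlinarith [hrE]
      have h2rs : 2 * s * r ≤ dist p q := by
        have h := hE0
        rw [← hrE] at h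
        have h' : (2 * s * r) * (s + 1) ≤ dist p q * (s + 1) := by nlinarith [h]
        exact le_of_mul_le_mul_right h' (by linarith)
      have hrD : r < dist p q := by nlinarith [h2rs, hr0, hD]
      have hppD : dist p p' < dist p q := lt_of_le_of_lt h1 hrD
      have hqqD : dist q' q < dist p q := by
        rw [dist_comm]; exact lt_of_le_of_lt h2 hrD
      have hmemF : ∀ x ∈ P, x ∈ F := fun x hx => hP.mem_toFinset.mpr hx
      -- cardinal decrease
      have hcd : ∀ a b : EuclideanSpace ℝ (Fin d), a ∈ P → b ∈ P → dist a b < dist p q →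
          ((F ×ˢ F).filter (fun e => dist e.1 e.2 < dist a b)).card <
          ((F ×ˢ F).filter (fun e => dist e.1 e.2 < dist p q)).card := by
        intro a b ha hb hab
        apply Finset.card_lt_card
        rw [Finset.ssubset_iff_of_subset
          (Finset.monotone_filter_right _ (fun e _ he => lt_trans he hab))]
        exact ⟨(a, b), Finset.mem_filter.mpr
          ⟨Finset.mem_product.mpr ⟨hmemF a ha, hmemF b hb⟩, hab⟩,
          fun hmem => absurd (Finset.mem_filter.mp hmem).2 (lt_irrefl _)⟩
      have hn1 := lt_of_lt_of_le (hcd p p' hp hp' hppD) hcard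
      have hn2 := lt_of_lt_of_le (hcd q' q hq' hq hqqD) hcard
      obtain ⟨l1, hh1, hl1, hc1, hlen1⟩ := ih _ hn1 p hp p' hp' le_rfl
      obtain ⟨l2, hh2, hl2, hc2, hlen2⟩ := ih _ hn2 q' hq' q hq le_rfl
      -- decompose l1 = l1' ++ [p']
      obtain ⟨l1', x, rfl⟩ := l1.eq_nil_or_concat.resolve_left (by
        rintro rfl; simp at hl1)
      rw [List.concat_eq_append] at hh1 hl1 hc1 hlen1
      have hx : x = p' := by
        rw [List.getLast?_concat] at hl1; exact (Option.some_inj.mp hl1)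
      rw [hx] at hh1 hc1 hlen1
      -- decompose l2 = q' :: t2
      obtain ⟨t2, rfl⟩ : ∃ t2, l2 = q' :: t2 := by
        cases l2 with
        | nil => simp at hh2
        | cons y t2 =>
          simp only [List.head?_cons, Option.some_inj] at hh2
          exact ⟨t2, by rw [hh2]⟩
      refine ⟨l1' ++ p' :: q' :: t2, ?_, ?_, ?_, ?_⟩
      · rw [head?_append_cons]; exact hh1
      · rw [List.getLast?_append_cons]
        simpa using hl2
      · rw [show l1' ++ p' :: q' :: t2 = (l1' ++ [p']) ++ q' :: t2 by simp]
        refine List.isChain_append.mpr ⟨hc1, hc2, ?_⟩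
        intro a ha b hb
        rw [List.getLast?_concat] at ha
        simp at ha hb
        rw [← ha, ← hb]; exact hE
      · rw [pathLength_append]
        have hb1 : pathLength (l1' ++ [p']) ≤ k * r :=
          le_trans hlen1 (mul_le_mul_of_nonneg_left h1 hk0)
        have hb2 : pathLength (q' :: t2) ≤ k * r := by
          refine le_trans hlen2 ?_
          have : dist q' q ≤ r := by rw [dist_comm]; exact h2
          exact mul_le_mul_of_nonneg_left this hk0
        have hB : (2 * (k * r) + dist p' q') * (s - 1) ≤ (k * dist p q) * (s - 1) := by
          have hA : 2 * (k * r) * (s - 1) = dist p' q' := by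
            linear_combination 2 * r * hk + hrE
          calc (2 * (k * r) + dist p' q') * (s - 1)
              = 2 * (k * r) * (s - 1) + dist p' q' * (s - 1) := by ring
            _ = dist p' q' * s := by rw [hA]; ring
            _ ≤ dist p q * (s + 1) := hE0
            _ = (k * dist p q) * (s - 1) := by linear_combination (-(dist p q)) * hk
        have := le_of_mul_le_mul_right hB hs1
        linarith
  intro p hp q hq
  exact key _ p hp q hq le_rfl
end

section
/- Let h : ℝ≥1 → ℝ be a function satisfying h(x) ≤ 2·h(x/(2s)) + 1 for all x ≥ 2s, and h(x) ≤ 1 for 1 ≤ x < 2s, where s > 1/2. Then h(x) ≤ 2·x^{1/(1 + log₂ s)} for all x ≥ 1. -/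
/-- If `h` satisfies the recurrence `h x ≤ 2·h(x/(2s)) + 1` for `x ≥ 2s` and
`h x ≤ 1` for `1 ≤ x < 2s`, with `s > 1/2`, then `h x ≤ 2 · x^(1/(1 + log₂ s))` for all
`x ≥ 1`. -/
theorem stmt7 (s : ℝ) (hs : 1 / 2 < s) (h : ℝ → ℝ)
    (hrec : ∀ x : ℝ, 2 * s ≤ x → h x ≤ 2 * h (x / (2 * s)) + 1)
    (hbase : ∀ x : ℝ, 1 ≤ x → x < 2 * s → h x ≤ 1) :
    ∀ x : ℝ, 1 ≤ x → h x ≤ 2 * x ^ (1 / (1 + Real.logb 2 s)) := by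
  have hs1 : (1:ℝ) < 2 * s := by linarith
  have hs0 : (0:ℝ) < 2 * s := by linarith
  set α := 1 / (1 + Real.logb 2 s) with hα
  have hL : Real.logb 2 (2 * s) = 1 + Real.logb 2 s := by
    rw [Real.logb_mul (by norm_num) (by linarith)]
    simp
  have hLpos : 0 < 1 + Real.logb 2 s := by
    rw [← hL]; exact Real.logb_pos (by norm_num) hs1
  have hαpos : 0 < α := by rw [hα]; positivity
  have key : (2 * s) ^ α = 2 := by
    have h2s : (2 * s : ℝ) = (2:ℝ) ^ (1 + Real.logb 2 s) := by
      rw [← hL, Real.rpow_logb (by norm_num) (by norm_num) hs0]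
    rw [hα]
    nth_rewrite 1 [h2s]
    rw [← Real.rpow_mul (by norm_num), mul_one_div, div_self hLpos.ne', Real.rpow_one]
  have main : ∀ n : ℕ, ∀ x : ℝ, 1 ≤ x → x < (2*s)^(n+1) → h x ≤ 2 * x ^ α - 1 := by
    intro n
    induction n with
    | zero =>
      intro x hx1 hx2
      rw [pow_one] at hx2
      have hb := hbase x hx1 hx2
      have hxα : 1 ≤ x ^ α := Real.one_le_rpow hx1 hαpos.le
      linarith
    | succ n ih =>
      intro x hx1 hx2
      by_cases hc : x < 2 * s
      · have hb := hbase x hx1 hc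
        have hxα : 1 ≤ x ^ α := Real.one_le_rpow hx1 hαpos.le
        linarith
      · push_neg at hc
        have hy1 : 1 ≤ x / (2*s) := (one_le_div hs0).2 hc
        have hy2 : x / (2*s) < (2*s)^(n+1) := by
          rw [div_lt_iff₀ hs0]
          calc x < (2*s)^(n+1+1) := hx2
          _ = (2*s)^(n+1) * (2*s) := by ring
        have h1 := hrec x hc
        have h2 := ih _ hy1 hy2
        have hxpos : (0:ℝ) < x := by linarith
        have hdiv : (x / (2*s)) ^ α = x ^ α / 2 := by
          rw [Real.div_rpow hxpos.le hs0.le, key]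
        rw [hdiv] at h2
        linarith
  intro x hx1
  obtain ⟨n, hn⟩ := pow_unbounded_of_one_lt x hs1
  have hn' : x < (2*s)^(n+1) :=
    lt_of_lt_of_le hn (pow_le_pow_right₀ hs1.le (Nat.le_succ n))
  have := main n x hx1 hn'
  linarith
end

section
/- Let s > 1, and let (p₁,q₁), …, (p_k,q_k) be pairs of points in R^d such that: (a) all q_ℓ lie in a common ball of radius R; (b) all p_ℓ lie in a common ball of radius r_min/2 where r_min ≤ R; and (c) for every ℓ < ℓ', either |p_{ℓ'} p_ℓ| > r_min or |q_{ℓ'} q_ℓ| > r_min. Then k ≤ (2R/r_min + 1)^d. -/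
open Metric MeasureTheory Set Module ENNReal

/-- Group-counting packing step. If `(p ℓ, q ℓ)`, `ℓ < k`, are pairs in `ℝ^d`
such that all `q ℓ` lie in a ball of radius `R`, all `p ℓ` lie in a ball of radius
`rmin/2` with `0 < rmin ≤ R`, and for every `ℓ < ℓ'` either `dist (p ℓ') (p ℓ) > rmin` or
`dist (q ℓ') (q ℓ) > rmin`, then `k ≤ (2R/rmin + 1)^d`. -/
theorem stmt11 {d : ℕ} (s : ℝ) (hs : 1 < s) (k : ℕ)
    (p q : Fin k → EuclideanSpace ℝ (Fin d))
    (cp cq : EuclideanSpace ℝ (Fin d)) (R rmin : ℝ)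
    (hrmin : 0 < rmin) (hrR : rmin ≤ R)
    (hq : ∀ ℓ, q ℓ ∈ Metric.closedBall cq R)
    (hp : ∀ ℓ, p ℓ ∈ Metric.closedBall cp (rmin / 2))
    (hsep : ∀ ℓ ℓ' : Fin k, ℓ < ℓ' →
      rmin < dist (p ℓ') (p ℓ) ∨ rmin < dist (q ℓ') (q ℓ)) :
    (k : ℝ) ≤ (2 * R / rmin + 1) ^ d := by
  -- all p's are within rmin of each other, so q's are rmin-separated
  have hqsep : ∀ ℓ ℓ' : Fin k, ℓ ≠ ℓ' → rmin < dist (q ℓ') (q ℓ) := by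
    intro ℓ ℓ' hne
    have key : ∀ a b : Fin k, a < b → rmin < dist (q b) (q a) := by
      intro a b hab
      rcases hsep a b hab with h | h
      · exfalso
        have h1 := hp a
        have h2 := hp b
        rw [Metric.mem_closedBall] at h1 h2
        have : dist (p b) (p a) ≤ rmin / 2 + rmin / 2 :=
          (dist_triangle (p b) cp (p a)).trans
            (add_le_add h2 (by rwa [dist_comm]))
        linarith
      · exact h
    rcases lt_or_gt_of_ne hne with h | h
    · exact key ℓ ℓ' h
    · rw [dist_comm]; exact key ℓ' ℓ h
  -- volume argument
  borelize (EuclideanSpace ℝ (Fin d))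
  set μ : Measure (EuclideanSpace ℝ (Fin d)) := Measure.addHaar with hμ
  have hfr : finrank ℝ (EuclideanSpace ℝ (Fin d)) = d := finrank_euclideanSpace_fin
  have δpos : (0:ℝ) < rmin / 2 := by positivity
  set A := ⋃ ℓ ∈ (Finset.univ : Finset (Fin k)), ball (q ℓ) (rmin / 2) with hA
  have D : Set.Pairwise ↑(Finset.univ : Finset (Fin k))
      (Function.onFun Disjoint fun ℓ => ball (q ℓ) (rmin / 2)) := by
    rintro a - b - hab
    apply ball_disjoint_ball
    rw [dist_comm]
    have := hqsep a b hab
    linarith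
  have A_subset : A ⊆ ball cq (R + rmin / 2) := by
    refine iUnion₂_subset fun ℓ _ => ?_
    apply ball_subset_ball'
    have := hq ℓ
    rw [Metric.mem_closedBall] at this
    linarith
  have I :
      (k : ℝ≥0∞) * ENNReal.ofReal ((rmin / 2) ^ d) * μ (ball 0 1) ≤
        ENNReal.ofReal ((R + rmin / 2) ^ d) * μ (ball 0 1) :=
    calc
      (k : ℝ≥0∞) * ENNReal.ofReal ((rmin / 2) ^ d) * μ (ball 0 1) = μ A := by
        rw [hA, measure_biUnion_finset D fun c _ => measurableSet_ball]
        simp only [μ.addHaar_ball_of_pos _ δpos, hfr]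
        simp [Finset.sum_const, mul_assoc]
      _ ≤ μ (ball cq (R + rmin / 2)) := measure_mono A_subset
      _ = ENNReal.ofReal ((R + rmin / 2) ^ d) * μ (ball 0 1) := by
        rw [μ.addHaar_ball_of_pos _ (by linarith : (0:ℝ) < R + rmin / 2), hfr]
  have J : (k : ℝ≥0∞) * ENNReal.ofReal ((rmin / 2) ^ d) ≤
      ENNReal.ofReal ((R + rmin / 2) ^ d) :=
    (ENNReal.mul_le_mul_iff_left (measure_ball_pos _ _ zero_lt_one).ne' measure_ball_lt_top.ne).1 I
  have K : (k : ℝ) * (rmin / 2) ^ d ≤ (R + rmin / 2) ^ d := by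
    have h1 : (k : ℝ≥0∞) * ENNReal.ofReal ((rmin / 2) ^ d) =
        ENNReal.ofReal ((k : ℝ) * (rmin / 2) ^ d) := by
      rw [ENNReal.ofReal_mul (Nat.cast_nonneg k), ENNReal.ofReal_natCast]
    rw [h1] at J
    exact (ENNReal.ofReal_le_ofReal_iff (pow_nonneg (by linarith) d)).1 J
  have K' : (k : ℝ) ≤ ((R + rmin / 2) / (rmin / 2)) ^ d := by
    rw [div_pow, le_div_iff₀ (pow_pos δpos d)]
    exact K
  have hρδ : (R + rmin / 2) / (rmin / 2) = 2 * R / rmin + 1 := by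
    field_simp
  rwa [hρδ] at K'
end

section
/- Let s > 1 and let W be a greedy s-WSPD of an n-point set P ⊆ R^d (pairs of the form (B_r(p), B_r(q)), r = |pq|/(2s+2), chosen so that each new generating pair (p,q) is not covered by existing pairs, until all pairs are covered). Fix any map φ sending each pair of W to a 'cousin pair' of a discrete center hierarchy as in the paper, i.e., to level-i nodes (u_i, v_i) with |p u_i| ≤ 2^{i+1}, |q v_i| ≤ 2^{i+1}, c·2^i < |u_i v_i| ≤ 2(c+2)·2^i where c = 4(s+1). Then the number of pairs of W mapped by φ to any single cousin pair is at most (5 + 6/s)^d · (9 + 12/s)^d. -/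
open MeasureTheory Metric Module

/-- Packing lemma: if `m` points in a finite-dimensional normed real vector space are pairwise
more than `ε` apart and all lie within distance `R` of a point `x₀`, then
`m * (ε/2)^dim ≤ (R + ε/2)^dim`, by comparing Haar measures of disjoint balls. -/
lemma stmt18_pack_bound {E : Type*} [NormedAddCommGroup E] [NormedSpace ℝ E] [MeasurableSpace E]
    [BorelSpace E] [FiniteDimensional ℝ E] (μ : Measure E) [μ.IsAddHaarMeasure]
    {m : ℕ} (x : Fin m → E) (x₀ : E) {ε R : ℝ} (hε : 0 < ε) (hR : 0 ≤ R)
    (hsep : ∀ a b : Fin m, a ≠ b → ε < dist (x a) (x b))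
    (hball : ∀ a, dist (x a) x₀ ≤ R) :
    (m : ℝ) * (ε / 2) ^ (finrank ℝ E) ≤ (R + ε / 2) ^ (finrank ℝ E) := by
  have hε2 : (0:ℝ) ≤ ε / 2 := by linarith
  have hdisj : Pairwise (Function.onFun Disjoint fun a => closedBall (x a) (ε / 2)) := by
    intro a b hab
    exact closedBall_disjoint_closedBall (by linarith [hsep a b hab])
  have hsub : (⋃ a, closedBall (x a) (ε / 2)) ⊆ closedBall x₀ (R + ε / 2) := by
    refine Set.iUnion_subset fun a y hy => ?_
    simp only [mem_closedBall] at *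
    calc dist y x₀ ≤ dist y (x a) + dist (x a) x₀ := dist_triangle _ _ _
      _ ≤ R + ε / 2 := by linarith [hball a]
  have hmeas : ∑' a : Fin m, μ (closedBall (x a) (ε / 2)) ≤ μ (closedBall x₀ (R + ε / 2)) := by
    rw [← measure_iUnion hdisj fun a => measurableSet_closedBall]
    exact measure_mono hsub
  rw [tsum_fintype] at hmeas
  have hsmall : ∀ a : Fin m, μ (closedBall (x a) (ε / 2))
      = ENNReal.ofReal ((ε / 2) ^ finrank ℝ E) * μ (ball 0 1) :=
    fun a => Measure.addHaar_closedBall μ (x a) hε2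
  have hbig : μ (closedBall x₀ (R + ε / 2))
      = ENNReal.ofReal ((R + ε / 2) ^ finrank ℝ E) * μ (ball 0 1) :=
    Measure.addHaar_closedBall μ x₀ (by linarith)
  simp only [hsmall, Finset.sum_const, Finset.card_univ, Fintype.card_fin, hbig,
    nsmul_eq_mul] at hmeas
  have hK0 : μ (ball (0:E) 1) ≠ 0 := (measure_ball_pos μ 0 one_pos).ne'
  have hKT : μ (ball (0:E) 1) ≠ ⊤ := measure_ball_lt_top.ne
  rw [← mul_assoc, ENNReal.mul_le_mul_iff_left hK0 hKT] at hmeas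
  have : ENNReal.ofReal ((m : ℝ) * (ε / 2) ^ finrank ℝ E)
      ≤ ENNReal.ofReal ((R + ε / 2) ^ finrank ℝ E) := by
    rwa [ENNReal.ofReal_mul (by positivity), ENNReal.ofReal_natCast]
  exact (ENNReal.ofReal_le_ofReal_iff (by positivity)).mp this

/-- Suppose the greedy `s`-WSPD pairs `(p ℓ, q ℓ)`, `ℓ < m` (with radii
`r ℓ = dist (p ℓ) (q ℓ)/(2s+2)`, each later generating pair not covered by an earlier one),
all map to a single cousin pair `(u, v)` at level `i` of the discrete center hierarchy:
`dist (p ℓ) u ≤ 2^(i+1)`, `dist (q ℓ) v ≤ 2^(i+1)`,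
`(c−4)·2^i ≤ dist (p ℓ) (q ℓ) ≤ 2(c+4)·2^i`, and `c·2^i < dist u v ≤ 2(c+2)·2^i`, where
`c = 4(s+1)` and `s > 1`. Then `m ≤ (5 + 6/s)^d · (9 + 12/s)^d`. -/
theorem stmt18 {d : ℕ} (s c : ℝ) (hs : 1 < s) (hc : c = 4 * (s + 1)) (i : ℕ)
    (m : ℕ) (p q : Fin m → EuclideanSpace ℝ (Fin d))
    (r : Fin m → ℝ) (hr : ∀ ℓ, r ℓ = dist (p ℓ) (q ℓ) / (2 * s + 2))
    (u v : EuclideanSpace ℝ (Fin d))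
    (huv : c * 2 ^ i < dist u v ∧ dist u v ≤ 2 * (c + 2) * 2 ^ i)
    (hmap : ∀ ℓ, dist (p ℓ) u ≤ 2 ^ (i + 1) ∧ dist (q ℓ) v ≤ 2 ^ (i + 1) ∧
      (c - 4) * 2 ^ i ≤ dist (p ℓ) (q ℓ) ∧ dist (p ℓ) (q ℓ) ≤ 2 * (c + 4) * 2 ^ i)
    (hgreedy : ∀ ℓ ℓ' : Fin m, ℓ < ℓ' →
      ¬ (dist (p ℓ') (p ℓ) ≤ r ℓ ∧ dist (q ℓ') (q ℓ) ≤ r ℓ)) :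
    (m : ℝ) ≤ (5 + 6 / s) ^ d * (9 + 12 / s) ^ d := by
  have hs0 : (0:ℝ) < s := by linarith
  have h2i : (0:ℝ) < 2 ^ i := by positivity
  set ε : ℝ := 4 * s * 2 ^ i / (2 * s + 2) with hεdef
  have hεpos : 0 < ε := by positivity
  have hrε : ∀ ℓ, ε ≤ r ℓ := by
    intro ℓ
    have h1 := (hmap ℓ).2.2.1
    have h1' : 4 * s * 2 ^ i ≤ dist (p ℓ) (q ℓ) := by
      have heq : (c - 4) * 2 ^ i = 4 * s * 2 ^ i := by rw [hc]; ring
      linarith [heq ▸ h1]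
    rw [hr ℓ, hεdef]
    gcongr
  -- the points (p ℓ, q ℓ) in the product space are ε-separated
  have hsep : ∀ a b : Fin m, a ≠ b →
      ε < dist ((p a, q a) : EuclideanSpace ℝ (Fin d) × EuclideanSpace ℝ (Fin d)) (p b, q b) := by
    have key : ∀ a b : Fin m, a < b →
        ε < max (dist (p a) (p b)) (dist (q a) (q b)) := by
      intro a b hab
      have h := hgreedy a b hab
      push_neg at h
      by_cases hp : dist (p b) (p a) ≤ r a
      · calc ε ≤ r a := hrε a
          _ < dist (q b) (q a) := h hp
          _ = dist (q a) (q b) := dist_comm _ _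
          _ ≤ _ := le_max_right _ _
      · push_neg at hp
        calc ε ≤ r a := hrε a
          _ < dist (p b) (p a) := hp
          _ = dist (p a) (p b) := dist_comm _ _
          _ ≤ _ := le_max_left _ _
    intro a b hab
    rw [Prod.dist_eq]
    rcases lt_or_gt_of_ne hab with h | h
    · exact key a b h
    · rw [dist_comm (p a) (p b), dist_comm (q a) (q b)]
      exact key b a h
  have hball : ∀ a : Fin m,
      dist ((p a, q a) : EuclideanSpace ℝ (Fin d) × EuclideanSpace ℝ (Fin d)) (u, v)
        ≤ 2 ^ (i + 1) := by
    intro a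
    rw [Prod.dist_eq]
    exact max_le (hmap a).1 (hmap a).2.1
  haveI : Measure.IsAddHaarMeasure
      ((volume : Measure (EuclideanSpace ℝ (Fin d))).prod volume) :=
    Measure.prod.instIsAddHaarMeasure (volume : Measure (EuclideanSpace ℝ (Fin d)))
      (volume : Measure (EuclideanSpace ℝ (Fin d)))
  have hpack := stmt18_pack_bound ((volume : Measure (EuclideanSpace ℝ (Fin d))).prod volume)
    (fun a => (p a, q a)) (u, v) hεpos (by positivity) hsep hball
  have hrank : finrank ℝ (EuclideanSpace ℝ (Fin d) × EuclideanSpace ℝ (Fin d)) = 2 * d := by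
    rw [Module.finrank_prod, finrank_euclideanSpace_fin, two_mul]
  rw [hrank] at hpack
  have heq : ((2:ℝ) ^ (i + 1) + ε / 2) = (3 + 2 / s) * (ε / 2) := by
    rw [hεdef]
    field_simp
    ring
  rw [heq, mul_pow] at hpack
  have hpow : (0:ℝ) < (ε / 2) ^ (2 * d) := by positivity
  calc (m : ℝ) ≤ (3 + 2 / s) ^ (2 * d) := le_of_mul_le_mul_right hpack hpow
    _ = ((3 + 2 / s) ^ 2) ^ d := by rw [← pow_mul]
    _ ≤ ((5 + 6 / s) * (9 + 12 / s)) ^ d := by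
        apply pow_le_pow_left₀ (by positivity)
        rw [← sub_nonneg]
        have hdiff : (5 + 6 / s) * (9 + 12 / s) - (3 + 2 / s) ^ 2
            = (36 * s ^ 2 + 102 * s + 68) / s ^ 2 := by
          field_simp
          ring
        rw [hdiff]
        positivity
    _ = (5 + 6 / s) ^ d * (9 + 12 / s) ^ d := mul_pow _ _ _
end
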